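/- arXiv:cs/0502013 — 3 statements merged into one kernel-verified Lean document; each statement's English description precedes it below -/
import Mathlib

section
/- In Schaefer's positive CNF formula game, if Player One (the 'true' player) has a winning strategy from a position where the set of already-chosen-true variables is T and chosen-false variables is F, then Player One also has a winning strategy from any position with chosen-true set T' ⊇ T and chosen-false set F' ⊆ F (with T' and F' disjoint and the same player to move, and the remaining free variables of the second position contained in those of the first together with T'∪F'-adjustments preserving legality). In particular, acquiring extra true variables never hurts Player One. -/
variable {V : Type} [Fintype V] [DecidableEq V]

/-- Schaefer's positive formula game. A position consists of the set `T` of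
variables already chosen (set true) by Player One, the set `Fl` of variables
already chosen (set false) by Player Two, and whose turn it is (`true` =
Player One to move); `n` is the number of variables still free. Player One
wins iff, after all variables are chosen, `F` is true on the indicator
assignment of his chosen set. -/
def P1Wins (F : (V → Bool) → Bool) : ℕ → Bool → Finset V → Finset V → Prop
  | 0, _, T, _ => F (fun v => decide (v ∈ T)) = true
  | n + 1, true, T, Fl => ∃ v, v ∉ T ∪ Fl ∧ P1Wins F n false (insert v T) Fl
  | n + 1, false, T, Fl => ∀ v, v ∉ T ∪ Fl → P1Wins F n true T (insert v Fl)

/-- Monotonicity of winning positions for Player One in the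
positive formula game: if Player One wins from position `(T, Fl)`, he also
wins from any position `(T', Fl')` with `T ⊆ T'`, `Fl' ⊆ Fl`, `T'` and `Fl'`
disjoint and the same chosen variables (hence the same free variables) and the
same player to move. Acquiring extra true variables never hurts Player One. -/
theorem P1Wins_mono (F : (V → Bool) → Bool)
    (hF : ∀ σ τ : V → Bool, σ ≤ τ → F σ = true → F τ = true)
    (n : ℕ) (turn : Bool) (T Fl T' Fl' : Finset V)
    (hTF : Disjoint T Fl) (hTF' : Disjoint T' Fl')
    (hT : T ⊆ T') (hFl : Fl' ⊆ Fl) (hunion : T' ∪ Fl' = T ∪ Fl)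
    (hwin : P1Wins F n turn T Fl) :
    P1Wins F n turn T' Fl' := by
  induction n generalizing turn T Fl T' Fl' with
  | zero =>
    refine hF _ _ (fun v => ?_) hwin
    simp only [Bool.le_iff_imp, decide_eq_true_eq]
    exact fun h => hT h
  | succ n ih =>
    cases turn with
    | true =>
      obtain ⟨v, hv, hw⟩ := hwin
      refine ⟨v, by rw [hunion]; exact hv, ?_⟩
      have hvT : v ∉ T := fun h => hv (Finset.mem_union_left _ h)
      have hvFl : v ∉ Fl := fun h => hv (Finset.mem_union_right _ h)
      have hvFl' : v ∉ Fl' := fun h => hvFl (hFl h)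
      refine ih false (insert v T) Fl (insert v T') Fl' ?_ ?_ ?_ hFl ?_ hw
      · exact Finset.disjoint_insert_left.mpr ⟨hvFl, hTF⟩
      · exact Finset.disjoint_insert_left.mpr ⟨hvFl', hTF'⟩
      · exact Finset.insert_subset_insert _ hT
      · rw [Finset.insert_union, Finset.insert_union, hunion]
    | false =>
      intro v hv
      have hv' : v ∉ T ∪ Fl := by rw [← hunion]; exact hv
      have hvT' : v ∉ T' := fun h => hv (Finset.mem_union_left _ h)
      have hvT : v ∉ T := fun h => hv' (Finset.mem_union_left _ h)
      refine ih true T (insert v Fl) T' (insert v Fl') ?_ ?_ hT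
        (Finset.insert_subset_insert _ hFl) ?_ (hwin v hv')
      · exact Finset.disjoint_insert_right.mpr ⟨hvT, hTF⟩
      · exact Finset.disjoint_insert_right.mpr ⟨hvT', hTF'⟩
      · rw [Finset.union_insert, Finset.union_insert, hunion]
end

section
/- Crossover correctness from half-crossover and AND/split behavior, abstractly: suppose a circuit is built from two splits, four half-crossovers (each passing through at most as many signals as it receives, with straight-through routing available), and two AND gates (output active iff both inputs active). Then each crossover output is active iff the corresponding (crossing) input is active, for all four input combinations. -/
/-- Number of `true`s among a pair of signals. -/
def sigCount (x y : Bool) : ℕ := (if x then 1 else 0) + (if y then 1 else 0)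

/-- Half-crossover: from inputs `(a, c)` it may nondeterministically produce any
outputs `(b, d)` whose number of active signals is at most that of the inputs. -/
def hc (a c b d : Bool) : Prop := sigCount b d ≤ sigCount a c

/-- The crossover circuit: the input `X` is split into two copies and `Y` is
split into two copies (a split maps `x` to `(x, x)`); these feed a network of
four half-crossovers, and each output is produced by an AND gate
(`x && y`). `crossover X Y X' Y'` holds iff some choice of half-crossover
behaviors produces outputs `X'`, `Y'` from inputs `X`, `Y`. -/
def crossover (X Y X' Y' : Bool) : Prop :=
  ∃ a b c d e f p q : Bool,
    hc X Y a b ∧        -- first half-crossover, fed by a copy of X and of Y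
    hc X b c d ∧        -- second, fed by the other copy of X
    hc d Y e f ∧        -- third, fed by the other copy of Y
    hc a c p q ∧        -- fourth
    X' = (p && q) ∧     -- AND gate producing X'
    Y' = (e && f)       -- AND gate producing Y'

/-- Crossover correctness: the desired outputs `X' = X`, `Y' = Y`
are simultaneously attainable, and no adversarial choice of half-crossover
outputs can activate an output whose corresponding (crossing) input is
inactive. Hence each crossover output can be made active iff the corresponding
input is active. -/
theorem crossover_correct :
    (∀ X Y : Bool, crossover X Y X Y) ∧
    (∀ X Y X' Y' : Bool, crossover X Y X' Y' →
      (X' = true → X = true) ∧ (Y' = true → Y = true)) := by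
  constructor
  · intro X Y
    exact ⟨X, Y, X, Y, Y, Y, X, X, le_refl _, le_refl _, le_refl _, le_refl _,
      (Bool.and_self X).symm, (Bool.and_self Y).symm⟩
  · intro X Y X' Y' h
    revert h
    revert X Y X' Y'
    simp only [crossover, hc, sigCount]
    decide
end

section
/- In a formula game where the monotone function F depends on no variables chosen so far and Player One can always respond to preserve a winning invariant, skipping a 'useful' move cannot help: formally, if a player has a winning strategy in the formula game, then that player also has a winning strategy in the modified game where the opponent is additionally allowed, on any turn, to pass (choosing no variable), with passing granting the first player the next choice. -/
variable {V : Type} [Fintype V] [DecidableEq V]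

/-- Player One has a winning strategy in the modified formula game in which the
opponent (Player Two) may additionally pass on any of his turns, with at most
`k` passes in total (so the game terminates). A pass just transfers the turn
back to Player One. -/
def P1WinsPass (F : (V → Bool) → Bool) : ℕ → ℕ → Bool → Finset V → Finset V → Prop
  | 0, _, _, T, _ => F (fun v => decide (v ∈ T)) = true
  | n + 1, k, true, T, Fl => ∃ v, v ∉ T ∪ Fl ∧ P1WinsPass F n k false (insert v T) Fl
  | n + 1, 0, false, T, Fl => ∀ v, v ∉ T ∪ Fl → P1WinsPass F n 0 true T (insert v Fl)
  | n + 1, k + 1, false, T, Fl =>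
      (∀ v, v ∉ T ∪ Fl → P1WinsPass F n (k + 1) true T (insert v Fl)) ∧
      P1WinsPass F (n + 1) k true T Fl
termination_by n k => n + k
decreasing_by all_goals omega

/-- Final-position lemma: if Player One wins a game position in which every
still-free variable lies in `W` (and the trues so far lie in `W`), then the
monotone `F` holds on `W`. -/
lemma endF_aux (F : (V → Bool) → Bool)
    (hF : ∀ σ τ : V → Bool, σ ≤ τ → F σ = true → F τ = true) :
    ∀ (m : ℕ) (c : Bool) (S Fl W : Finset V), S ⊆ W →
      (Finset.univ \ (S ∪ Fl)) ⊆ W →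
      m = (Finset.univ \ (S ∪ Fl)).card →
      P1Wins F m c S Fl → F (fun v => decide (v ∈ W)) = true := by
  intro m
  induction m with
  | zero =>
    intro c S Fl W hSW _ _ hwin
    refine hF _ _ (fun v => ?_) hwin
    rw [Bool.le_iff_imp]
    simp only [decide_eq_true_eq]
    exact fun h => hSW h
  | succ m ih =>
    intro c S Fl W hSW hfree hcard hwin
    cases c with
    | true =>
      obtain ⟨u, hu, hwin⟩ := hwin
      have hufree : u ∈ Finset.univ \ (S ∪ Fl) := by simp [hu]
      refine ih false (insert u S) Fl W ?_ ?_ ?_ hwin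
      · exact Finset.insert_subset (hfree hufree) hSW
      · intro v hv
        apply hfree
        simp only [Finset.mem_sdiff, Finset.mem_union, Finset.mem_insert] at hv ⊢
        tauto
      · have : Finset.univ \ (insert u S ∪ Fl) = (Finset.univ \ (S ∪ Fl)).erase u := by
          rw [Finset.insert_union, Finset.sdiff_insert]
        rw [this, Finset.card_erase_of_mem hufree, ← hcard]
        omega
    | false =>
      have hne : (Finset.univ \ (S ∪ Fl)).Nonempty := by
        rw [← Finset.card_pos, ← hcard]; omega
      obtain ⟨w, hw⟩ := hne
      have hw' : w ∉ S ∪ Fl := by simp only [Finset.mem_sdiff] at hw; exact hw.2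
      refine ih true S (insert w Fl) W hSW ?_ ?_ (hwin w hw')
      · intro v hv
        apply hfree
        simp only [Finset.mem_sdiff, Finset.mem_union, Finset.mem_insert] at hv ⊢
        tauto
      · have : Finset.univ \ (S ∪ insert w Fl) = (Finset.univ \ (S ∪ Fl)).erase w := by
          rw [Finset.union_insert, Finset.sdiff_insert]
        rw [this, Finset.card_erase_of_mem hw, ← hcard]
        omega

/-- The main simulation lemma.  The pass-game position `(n, k, b, T, Fl)` is
accompanied by a certificate: an ordinary-game position `(n + |T \ S|, c, S, Fl)`
with `S ⊆ T` (Player One may have made extra moves in the pass game, recorded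
in `T \ S`).  The turn flags satisfy `b = true ∨ c = false`. -/
lemma key_aux (F : (V → Bool) → Bool)
    (hF : ∀ σ τ : V → Bool, σ ≤ τ → F σ = true → F τ = true) :
    ∀ μ : ℕ, ∀ (n k : ℕ) (b c : Bool) (T Fl S : Finset V),
      S ⊆ T → Disjoint T Fl →
      n = (Finset.univ \ (T ∪ Fl)).card →
      2 * n + k + (T \ S).card ≤ μ →
      (b = true ∨ c = false) →
      P1Wins F (n + (T \ S).card) c S Fl →
      P1WinsPass F n k b T Fl := by
  intro μ
  induction μ using Nat.strong_induction_on with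
  | _ μ ih =>
  intro n k b c T Fl S hST hdis hcard hμ hbc hwin
  cases n with
  | zero =>
    -- the pass game is over: all variables are assigned
    have hTF : ∀ v : V, v ∈ T ∪ Fl := by
      intro v
      by_contra hv
      have : v ∈ Finset.univ \ (T ∪ Fl) := by simp [hv]
      have := Finset.card_pos.mpr ⟨v, this⟩
      omega
    have hset : Finset.univ \ (S ∪ Fl) = T \ S := by
      ext v
      have hv := hTF v
      have h2 : v ∈ T → v ∉ Fl := fun h => Finset.disjoint_left.mp hdis h
      simp only [Finset.mem_union] at hv
      simp only [Finset.mem_sdiff, Finset.mem_union, Finset.mem_univ, true_and]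
      constructor
      · intro h
        push_neg at h
        exact ⟨hv.resolve_right h.2, h.1⟩
      · intro h
        exact fun hc => hc.elim h.2 (h2 h.1)
    have hgoal : F (fun v => decide (v ∈ T)) = true := by
      refine endF_aux F hF ((T \ S).card) c S Fl T hST ?_ ?_ ?_
      · rw [hset]; exact Finset.sdiff_subset
      · rw [hset]
      · have : 0 + (T \ S).card = (T \ S).card := by omega
        rwa [this] at hwin
    simp only [P1WinsPass]
    exact hgoal
  | succ n =>
    -- helper facts
    have hfree_card : ∀ (x : V) (A B : Finset V), x ∉ A ∪ B →
        (Finset.univ \ (insert x A ∪ B)).card = (Finset.univ \ (A ∪ B)).card - 1 := by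
      intro x A B hx
      have h1 : Finset.univ \ (insert x A ∪ B) = (Finset.univ \ (A ∪ B)).erase x := by
        rw [Finset.insert_union, Finset.sdiff_insert]
      rw [h1, Finset.card_erase_of_mem (by simp [hx])]
    have hfree_card' : ∀ (x : V) (A B : Finset V), x ∉ A ∪ B →
        (Finset.univ \ (A ∪ insert x B)).card = (Finset.univ \ (A ∪ B)).card - 1 := by
      intro x A B hx
      have h1 : Finset.univ \ (A ∪ insert x B) = (Finset.univ \ (A ∪ B)).erase x := by
        rw [Finset.union_insert, Finset.sdiff_insert]
      rw [h1, Finset.card_erase_of_mem (by simp [hx])]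
    cases b with
    | true =>
      cases c with
      | true =>
        -- consult the certificate: ordinary Player One to move
        have harith : n + 1 + (T \ S).card = (n + (T \ S).card) + 1 := by omega
        rw [harith] at hwin
        obtain ⟨u, hu, hwin⟩ := hwin
        have huS : u ∉ S := fun h => hu (Finset.mem_union_left _ h)
        have huFl : u ∉ Fl := fun h => hu (Finset.mem_union_right _ h)
        by_cases huT : u ∈ T
        · -- the certificate's move is already true in the pass game: update cert only
          have huTS : u ∈ T \ S := Finset.mem_sdiff.mpr ⟨huT, huS⟩
          have hcard1 : (T \ insert u S).card = (T \ S).card - 1 := by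
            have : T \ insert u S = (T \ S).erase u := by
              rw [Finset.sdiff_insert]
            rw [this, Finset.card_erase_of_mem huTS]
          have hpos : 1 ≤ (T \ S).card := Finset.card_pos.mpr ⟨u, huTS⟩
          refine ih (μ - 1) (by omega) (n + 1) k true false T Fl (insert u S)
            (Finset.insert_subset huT hST) hdis hcard (by omega) (Or.inr rfl) ?_
          have : n + 1 + (T \ insert u S).card = n + (T \ S).card := by
            rw [hcard1]; omega
          rw [this]
          exact hwin
        · -- the certificate's move is still free: Player One plays it
          have huTFl : u ∉ T ∪ Fl := by
            simp only [Finset.mem_union]; tauto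
          simp only [P1WinsPass]
          refine ⟨u, huTFl, ?_⟩
          have hsd : insert u T \ insert u S = T \ S := by
            ext v
            simp only [Finset.mem_sdiff, Finset.mem_insert]
            constructor
            · rintro ⟨hv1, hv2⟩
              push_neg at hv2
              exact ⟨hv1.resolve_left hv2.1, hv2.2⟩
            · rintro ⟨hv1, hv2⟩
              refine ⟨Or.inr hv1, ?_⟩
              push_neg
              exact ⟨fun h => huT (h ▸ hv1), hv2⟩
          refine ih (μ - 1) (by omega) n k false false (insert u T) Fl (insert u S)
            (Finset.insert_subset_insert _ hST)
            (Finset.disjoint_insert_left.mpr ⟨huFl, hdis⟩) ?_ ?_ (Or.inr rfl) ?_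
          · rw [hfree_card u T Fl huTFl, ← hcard]; omega
          · rw [hsd]; omega
          · rw [hsd]; exact hwin
      | false =>
        -- certificate says opponent to move; Player One plays an arbitrary free var
        have hne : (Finset.univ \ (T ∪ Fl)).Nonempty := by
          rw [← Finset.card_pos, ← hcard]; omega
        obtain ⟨x, hx⟩ := hne
        have hx' : x ∉ T ∪ Fl := (Finset.mem_sdiff.mp hx).2
        have hxT : x ∉ T := fun h => hx' (Finset.mem_union_left _ h)
        have hxFl : x ∉ Fl := fun h => hx' (Finset.mem_union_right _ h)
        have hxS : x ∉ S := fun h => hxT (hST h)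
        simp only [P1WinsPass]
        refine ⟨x, hx', ?_⟩
        have hsd : insert x T \ S = insert x (T \ S) := by
          rw [Finset.insert_sdiff_of_notMem _ hxS]
        have hsdcard : (insert x T \ S).card = (T \ S).card + 1 := by
          rw [hsd, Finset.card_insert_of_notMem (fun h => hxT (Finset.mem_sdiff.mp h).1)]
        refine ih (μ - 1) (by omega) n k false false (insert x T) Fl S
          (hST.trans (Finset.subset_insert _ _))
          (Finset.disjoint_insert_left.mpr ⟨hxFl, hdis⟩) ?_ ?_ (Or.inr rfl) ?_
        · rw [hfree_card x T Fl hx', ← hcard]; omega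
        · rw [hsdcard]; omega
        · have : n + (insert x T \ S).card = n + 1 + (T \ S).card := by
            rw [hsdcard]; omega
          rw [this]
          exact hwin
    | false =>
      -- pass-game opponent to move; certificate turn must be false
      have hc : c = false := by
        rcases hbc with h | h
        · exact absurd h (by simp)
        · exact h
      subst hc
      have harith : n + 1 + (T \ S).card = (n + (T \ S).card) + 1 := by omega
      rw [harith] at hwin
      -- common part: handle an actual move `v` by the opponent
      have hmove : ∀ (k' : ℕ), 2 * n + k' + (T \ S).card ≤ μ - 1 →
          ∀ v, v ∉ T ∪ Fl → P1WinsPass F n k' true T (insert v Fl) := by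
        intro k' hk' v hv
        have hvT : v ∉ T := fun h => hv (Finset.mem_union_left _ h)
        have hvS : v ∉ S ∪ Fl := by
          simp only [Finset.mem_union] at hv ⊢
          exact fun h => hv (h.imp (fun h' => hST h') id)
        have hcert := hwin v hvS
        have hsd : T \ S ⊆ T := Finset.sdiff_subset
        refine ih (μ - 1) (by omega) n k' true true T (insert v Fl) S hST
          (Finset.disjoint_insert_right.mpr ⟨hvT, hdis⟩) ?_ (by omega) (Or.inl rfl) hcert
        · rw [hfree_card' v T Fl hv, ← hcard]; omega
      cases k with
      | zero =>
        simp only [P1WinsPass]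
        exact hmove 0 (by omega)
      | succ k =>
        simp only [P1WinsPass]
        constructor
        · exact hmove (k + 1) (by omega)
        · -- the opponent passes: Player One to move, certificate unchanged
          rw [← harith] at hwin
          simpa only [P1WinsPass] using
            ih (μ - 1) (by omega) (n + 1) k true false T Fl S hST hdis hcard
              (by omega) (Or.inr rfl) hwin

/-- If Player One wins the ordinary alternating formula game for a
monotone `F`, then Player One also wins the modified game in which the opponent
may pass (any bounded number `k` of times): skipping moves cannot help the
opponent. -/
theorem P1Wins_allow_passes (F : (V → Bool) → Bool)
    (hF : ∀ σ τ : V → Bool, σ ≤ τ → F σ = true → F τ = true)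
    (n : ℕ) (hn : n = Fintype.card V)
    (hwin : P1Wins F n true (∅ : Finset V) ∅) :
    ∀ k, P1WinsPass F n k true (∅ : Finset V) ∅ := by
  intro k
  have hunion : (∅ : Finset V) ∪ ∅ = ∅ := by simp
  have hcard : n = (Finset.univ \ ((∅ : Finset V) ∪ ∅)).card := by
    rw [hunion, Finset.sdiff_empty, hn, Finset.card_univ]
  have hsd : ((∅ : Finset V) \ ∅) = ∅ := by simp
  refine key_aux F hF (2 * n + k + 0) n k true true ∅ ∅ ∅ (subset_refl _)
    (by simp) hcard (by rw [hsd]; simp) (Or.inl rfl) ?_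
  rw [hsd]
  simpa using hwin
end
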